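/- arXiv:1009.1965 — 5 statements merged into one kernel-verified Lean document; each statement's English description precedes it below -/
import Mathlib

section
/- Let Ω ⊂ ℝ^d be a compact convex set with nonempty interior, let x ∈ Ω, and let w : [0,∞) → ℝ^d be a continuous path with w(0) = 0. If (X, l, n) and (X̃, l̃, ñ) are both solutions of the Skorokhod problem for (x, w) in Ω, then X(t) = X̃(t) for all t ≥ 0. -/
open MeasureTheory Set
open scoped RealInnerProductSpace

/-- The Lebesgue–Stieltjes measure associated with a continuous nondecreasing
function `l : ℝ → ℝ`. -/
noncomputable def lsMeasure (l : ℝ → ℝ) (hm : Monotone l) (hc : Continuous l) :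
    MeasureTheory.Measure ℝ :=
  StieltjesFunction.measure ⟨l, hm, fun _ => hc.continuousWithinAt⟩

/-- A solution `(X, l, n)` of the Skorokhod problem for `(x, w)` in `Ω`:
`X` is a continuous path in `Ω` starting at `x`; `l` is a continuous nondecreasing
local time (extended by `0` to `(-∞,0]`) starting at `0`; `n` is a Borel measurable
vector field with `‖n s‖ ≤ 1`; the Stieltjes measure `dl` is carried by the times at
which `X` is on the boundary `∂Ω`; for `dl`-a.e. `s`, `n s` is an inward normal to `Ω`
at `X s`; and `X t = x + w t + ∫₀ᵗ n(s) dl(s)` for all `t ≥ 0`. -/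
structure IsSkorokhodSolution {d : ℕ} (Ω : Set (EuclideanSpace ℝ (Fin d)))
    (x : EuclideanSpace ℝ (Fin d)) (w : ℝ → EuclideanSpace ℝ (Fin d))
    (X : ℝ → EuclideanSpace ℝ (Fin d)) (l : ℝ → ℝ)
    (n : ℝ → EuclideanSpace ℝ (Fin d)) : Prop where
  contX : ContinuousOn X (Ici 0)
  mapsTo : ∀ t, 0 ≤ t → X t ∈ Ω
  init : X 0 = x
  l_mono : Monotone l
  l_cont : Continuous l
  l_zero : ∀ t ≤ (0 : ℝ), l t = 0
  n_meas : Measurable n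
  n_bound : ∀ s, ‖n s‖ ≤ 1
  carried : lsMeasure l l_mono l_cont {s | 0 ≤ s ∧ X s ∉ frontier Ω} = 0
  normal : ∀ᵐ (s : ℝ) ∂(lsMeasure l l_mono l_cont), ∀ z ∈ Ω, 0 ≤ ⟪z - X s, n s⟫
  eqn : ∀ t, 0 ≤ t →
    X t = x + w t + ∫ s in Ioc (0 : ℝ) t, n s ∂(lsMeasure l l_mono l_cont)

/-!
The difference `Y = X - X'` of two solutions is driven only by the two reflection terms, and the
inward-normal condition says that each of them pushes `X` towards `X'` and `X'` towards `X`,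
i.e. `⟪Y, dY⟫ ≤ 0`. Hence `‖Y‖²` is nonincreasing, and it vanishes at time `0`.
Instead of a chain rule for Stieltjes integrals we use a fine partition: on a step `[a, b]`,
`‖Y b‖² - ‖Y a‖² ≤ 2 ⟪Y b, Y b - Y a⟫`, and `⟪Y b, Y b - Y a⟫` is at most the oscillation of `Y`
on `[a, b]` times the mass of `dl + dl'` there, which uniform continuity makes small.
-/

open Filter Topology

theorem sub_le_sub_of_le_on_short_intervals {g F : ℝ → ℝ} {t₀ t δ : ℝ} (hδ : 0 < δ) (ht : t₀ ≤ t)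
    (hloc : ∀ a b, t₀ ≤ a → a ≤ b → b ≤ t → b - a < δ → g b - g a ≤ F b - F a) :
    g t - g t₀ ≤ F t - F t₀ := by
  suffices ∀ N : ℕ, ∀ s, t₀ ≤ s → s ≤ t → s - t₀ ≤ N * (δ / 2) → g s - g t₀ ≤ F s - F t₀ by
    obtain ⟨N, hN⟩ := exists_nat_ge ((t - t₀) / (δ / 2))
    exact this N t ht le_rfl ((div_le_iff₀ (by positivity)).mp hN)
  intro N
  induction N with
  | zero =>
    intro s hs _ hsN
    obtain rfl : s = t₀ := by simp only [Nat.cast_zero, zero_mul] at hsN; linarith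
    simp
  | succ N ih =>
    intro s hs hst hsN
    by_cases hsδ : s - t₀ < δ
    · exact hloc t₀ s le_rfl hs hst hsδ
    · push_cast at hsN
      have := ih (s - δ / 2) (by linarith) (by linarith) (by linarith)
      have := hloc (s - δ / 2) s (by linarith) (by linarith) hst (by linarith)
      linarith

section InnerProductSpace

variable {E : Type*} [NormedAddCommGroup E] [InnerProductSpace ℝ E]

theorem norm_sq_sub_norm_sq_le_two_inner (u v : E) : ‖u‖ ^ 2 - ‖v‖ ^ 2 ≤ 2 * ⟪u, u - v⟫ := by
  rw [inner_sub_right, real_inner_self_eq_norm_sq]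
  nlinarith [norm_sub_sq_real u v, sq_nonneg ‖u - v‖]

theorem norm_le_norm_of_inner_sub_le {Y : ℝ → E} {F : ℝ → ℝ} {t₀ t : ℝ} (ht : t₀ ≤ t)
    (hY : ContinuousOn Y (Icc t₀ t))
    (hinc : ∀ a b ε, t₀ ≤ a → a ≤ b → b ≤ t → (∀ s ∈ Ioc a b, ‖Y b - Y s‖ ≤ ε) →
      ⟪Y b, Y b - Y a⟫ ≤ ε * (F b - F a)) :
    ‖Y t‖ ≤ ‖Y t₀‖ := by
  have hε : ∀ ε > 0, ‖Y t‖ ^ 2 ≤ ‖Y t₀‖ ^ 2 + ε * (2 * (F t - F t₀)) := by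
    intro ε hε
    obtain ⟨δ, hδ, hYδ⟩ := Metric.uniformContinuousOn_iff_le.mp
      (isCompact_Icc.uniformContinuousOn_of_continuous hY) ε hε
    have := sub_le_sub_of_le_on_short_intervals (g := fun s => ‖Y s‖ ^ 2)
      (F := fun s => 2 * ε * F s) hδ ht fun a b ha hab hb hba => by
        have hnear : ∀ s ∈ Ioc a b, ‖Y b - Y s‖ ≤ ε := fun s hs => by
          rw [← dist_eq_norm]
          refine hYδ b ⟨ha.trans hab, hb⟩ s ⟨ha.trans hs.1.le, hs.2.trans hb⟩ ?_
          rw [Real.dist_eq, abs_of_nonneg (sub_nonneg.2 hs.2)]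
          linarith [hs.1]
        calc ‖Y b‖ ^ 2 - ‖Y a‖ ^ 2 ≤ 2 * ⟪Y b, Y b - Y a⟫ := norm_sq_sub_norm_sq_le_two_inner _ _
          _ ≤ 2 * (ε * (F b - F a)) := by gcongr; exact hinc a b ε ha hab hb hnear
          _ = 2 * ε * F b - 2 * ε * F a := by ring
    linarith
  have hlim : Tendsto (fun ε => ‖Y t₀‖ ^ 2 + ε * (2 * (F t - F t₀))) (𝓝[>] 0)
      (𝓝 (‖Y t₀‖ ^ 2)) := by
    refine tendsto_nhdsWithin_of_tendsto_nhds ?_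
    simpa using ((continuous_mul_const (2 * (F t - F t₀))).const_add (‖Y t₀‖ ^ 2)).tendsto 0
  have hsq : ‖Y t‖ ^ 2 ≤ ‖Y t₀‖ ^ 2 :=
    ge_of_tendsto hlim (eventually_nhdsWithin_of_forall hε)
  exact (pow_le_pow_iff_left₀ (norm_nonneg _) (norm_nonneg _) two_ne_zero).mp hsq

theorem inner_setIntegral_le_of_inner_nonpos [CompleteSpace E] {α : Type*} [MeasurableSpace α]
    {μ : Measure α} {S : Set α} {f Y : α → E} {c : E} {ε : ℝ} (hS : MeasurableSet S)
    (hμS : μ S ≠ ⊤) (hf : IntegrableOn f S μ) (hf1 : ∀ s ∈ S, ‖f s‖ ≤ 1)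
    (hYf : ∀ᵐ s ∂μ, s ∈ S → ⟪Y s, f s⟫ ≤ 0) (hc : ∀ s ∈ S, ‖c - Y s‖ ≤ ε) :
    ⟪c, ∫ s in S, f s ∂μ⟫ ≤ ε * μ.real S := by
  have : IsFiniteMeasure (μ.restrict S) := isFiniteMeasure_restrict.mpr hμS
  rw [← integral_inner hf, mul_comm, ← smul_eq_mul, ← setIntegral_const]
  refine setIntegral_mono_on_ae (hf.const_inner c) (integrable_const ε) hS ?_
  filter_upwards [hYf] with s hYs hs
  calc ⟪c, f s⟫ = ⟪Y s, f s⟫ + ⟪c - Y s, f s⟫ := by rw [← inner_add_left, add_sub_cancel]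
    _ ≤ 0 + ‖c - Y s‖ := by
      gcongr
      · exact hYs hs
      · exact (real_inner_le_norm _ _).trans (mul_le_of_le_one_right (norm_nonneg _) (hf1 s hs))
    _ ≤ ε := by linarith [hc s hs]

end InnerProductSpace

instance (l : ℝ → ℝ) (hm : Monotone l) (hc : Continuous l) :
    IsLocallyFiniteMeasure (lsMeasure l hm hc) := by
  unfold lsMeasure; infer_instance

theorem lsMeasure_real_Ioc {l : ℝ → ℝ} (hm : Monotone l) (hc : Continuous l) {a b : ℝ}
    (hab : a ≤ b) : (lsMeasure l hm hc).real (Ioc a b) = l b - l a := by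
  rw [measureReal_def, lsMeasure, StieltjesFunction.measure_Ioc,
    ENNReal.toReal_ofReal (sub_nonneg.2 (hm hab))]

namespace IsSkorokhodSolution

variable {d : ℕ} {Ω : Set (EuclideanSpace ℝ (Fin d))} {x : EuclideanSpace ℝ (Fin d)}
  {w X : ℝ → EuclideanSpace ℝ (Fin d)} {l : ℝ → ℝ} {n : ℝ → EuclideanSpace ℝ (Fin d)}

theorem integrableOn_Ioc (h : IsSkorokhodSolution Ω x w X l n) (a b : ℝ) :
    IntegrableOn n (Ioc a b) (lsMeasure l h.l_mono h.l_cont) :=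
  Measure.integrableOn_of_bounded measure_Ioc_lt_top.ne h.n_meas.aestronglyMeasurable
    (ae_of_all _ h.n_bound)

theorem sub_eq (h : IsSkorokhodSolution Ω x w X l n) {a b : ℝ} (ha : 0 ≤ a) (hab : a ≤ b) :
    X b - X a = w b - w a + ∫ s in Ioc a b, n s ∂(lsMeasure l h.l_mono h.l_cont) := by
  rw [h.eqn b (ha.trans hab), h.eqn a ha, ← Ioc_union_Ioc_eq_Ioc ha hab,
    setIntegral_union (Ioc_disjoint_Ioc_of_le le_rfl) measurableSet_Ioc (h.integrableOn_Ioc _ _)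
      (h.integrableOn_Ioc _ _)]
  abel

theorem inner_setIntegral_le (h : IsSkorokhodSolution Ω x w X l n)
    {Z : ℝ → EuclideanSpace ℝ (Fin d)} (hZ : ∀ s, 0 ≤ s → Z s ∈ Ω)
    {c : EuclideanSpace ℝ (Fin d)} {ε a b : ℝ} (ha : 0 ≤ a) (hab : a ≤ b)
    (hc : ∀ s ∈ Ioc a b, ‖c - (X s - Z s)‖ ≤ ε) :
    ⟪c, ∫ s in Ioc a b, n s ∂(lsMeasure l h.l_mono h.l_cont)⟫ ≤ ε * (l b - l a) := by
  rw [← lsMeasure_real_Ioc h.l_mono h.l_cont hab]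
  refine inner_setIntegral_le_of_inner_nonpos measurableSet_Ioc measure_Ioc_lt_top.ne
    (h.integrableOn_Ioc a b) (fun s _ => h.n_bound s) ?_ hc
  filter_upwards [h.normal] with s hs hsS
  rw [← neg_sub, inner_neg_left, neg_nonpos]
  exact hs (Z s) (hZ s (ha.trans hsS.1.le))

theorem inner_sub_sub_le {X' : ℝ → EuclideanSpace ℝ (Fin d)} {l' : ℝ → ℝ}
    {n' : ℝ → EuclideanSpace ℝ (Fin d)} (h : IsSkorokhodSolution Ω x w X l n)
    (h' : IsSkorokhodSolution Ω x w X' l' n') {ε a b : ℝ} (ha : 0 ≤ a) (hab : a ≤ b)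
    (hε : ∀ s ∈ Ioc a b, ‖X b - X' b - (X s - X' s)‖ ≤ ε) :
    ⟪X b - X' b, X b - X' b - (X a - X' a)⟫ ≤ ε * (l b + l' b - (l a + l' a)) := by
  have e := h.inner_setIntegral_le h'.mapsTo ha hab hε
  have e' := h'.inner_setIntegral_le h.mapsTo ha hab (c := -(X b - X' b)) fun s hs => by
    rw [show -(X b - X' b) - (X' s - X s) = -(X b - X' b - (X s - X' s)) by abel, norm_neg]
    exact hε s hs
  rw [inner_neg_left] at e'
  rw [sub_sub_sub_comm, h.sub_eq ha hab, h'.sub_eq ha hab, add_sub_add_left_eq_sub,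
    inner_sub_right]
  linarith

end IsSkorokhodSolution

theorem skorokhod_uniqueness_general {d : ℕ} {Ω : Set (EuclideanSpace ℝ (Fin d))}
    {x : EuclideanSpace ℝ (Fin d)}
    {w : ℝ → EuclideanSpace ℝ (Fin d)}
    {X X' : ℝ → EuclideanSpace ℝ (Fin d)} {l l' : ℝ → ℝ}
    {n n' : ℝ → EuclideanSpace ℝ (Fin d)}
    (h : IsSkorokhodSolution Ω x w X l n)
    (h' : IsSkorokhodSolution Ω x w X' l' n') :
    ∀ t, 0 ≤ t → X t = X' t := by
  intro t ht
  have hY := norm_le_norm_of_inner_sub_le (Y := fun s => X s - X' s) (F := fun s => l s + l' s)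
    ht (h.contX.sub h'.contX |>.mono Icc_subset_Ici_self)
    fun _ _ _ ha hab _ hε => h.inner_sub_sub_le h' ha hab hε
  simpa [h.init, h'.init, sub_eq_zero] using hY

/-- Uniqueness of solutions of the Skorokhod problem in a compact convex set:
two solutions driven by the same continuous path `w` and the same starting point `x`
have the same reflected path. -/
theorem skorokhod_uniqueness {d : ℕ} {Ω : Set (EuclideanSpace ℝ (Fin d))}
    (hΩcomp : IsCompact Ω) (hΩconv : Convex ℝ Ω) (hΩint : (interior Ω).Nonempty)
    {x : EuclideanSpace ℝ (Fin d)} (hx : x ∈ Ω)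
    {w : ℝ → EuclideanSpace ℝ (Fin d)} (hw : ContinuousOn w (Ici 0)) (hw0 : w 0 = 0)
    {X X' : ℝ → EuclideanSpace ℝ (Fin d)} {l l' : ℝ → ℝ}
    {n n' : ℝ → EuclideanSpace ℝ (Fin d)}
    (h : IsSkorokhodSolution Ω x w X l n)
    (h' : IsSkorokhodSolution Ω x w X' l' n') :
    ∀ t, 0 ≤ t → X t = X' t :=
  skorokhod_uniqueness_general h h'
end

section
/- Let w : [0,∞) → ℝ^d be continuous, let x, y ∈ ℝ^d, let l, λ : [0,∞) → [0,∞) be continuous nondecreasing functions with l(0) = λ(0) = 0, and let n, m : [0,∞) → ℝ^d be bounded Borel measurable maps. Define X(t) = x + w(t) + ∫₀ᵗ n(s) dl(s) and Y(t) = y + w(t) + ∫₀ᵗ m(s) dλ(s) (Lebesgue–Stieltjes integrals). Then for every t ≥ 0, |X(t) − Y(t)|² = |x − y|² + 2∫₀ᵗ ⟨X(s) − Y(s), n(s)⟩ dl(s) − 2∫₀ᵗ ⟨X(s) − Y(s), m(s)⟩ dλ(s). -/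
/-! Since `w` cancels, `X - Y = (x - y) + F - G` with `F s = ∫_{(0,s]} n dl` and
`G s = ∫_{(0,s]} m dλ`. Expanding `‖x - y + F t - G t‖²`, each product `⟪F t, G t⟫` is a double
integral over `(0,t]²`; cutting the square along the diagonal and applying Fubini turns it into
`∫ ⟪F, m⟫ dλ + ∫ ⟪G, n⟫ dl`. The diagonal is not counted twice because continuous `l, λ` give
measures without atoms. -/

open MeasureTheory Set
open scoped RealInnerProductSpace

section

variable {E : Type*} [NormedAddCommGroup E] [InnerProductSpace ℝ E]
  {μ ν : Measure ℝ} {f g : ℝ → E}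

lemma integrable_indicator_le_inner (hf : Integrable f μ) (hg : Integrable g ν) :
    Integrable ({p : ℝ × ℝ | p.1 ≤ p.2}.indicator fun p => ⟪f p.1, g p.2⟫) (μ.prod ν) :=
  (hf.op_fst_snd continuous_inner ⟨1, fun x y => by simpa using abs_real_inner_le_norm x y⟩
    hg).indicator (measurableSet_le measurable_fst measurable_snd)

variable [CompleteSpace E]

lemma integral_indicator_le_inner_left (hf : Integrable f μ) (s : ℝ) :
    ∫ u, {p : ℝ × ℝ | p.1 ≤ p.2}.indicator (fun p => ⟪f p.1, g p.2⟫) (u, s) ∂μ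
      = ⟪∫ u in Iic s, f u ∂μ, g s⟫ := by
  have h : (fun u => {p : ℝ × ℝ | p.1 ≤ p.2}.indicator (fun p => ⟪f p.1, g p.2⟫) (u, s))
      = (Iic s).indicator fun u => ⟪g s, f u⟫ := by
    ext u; simp [indicator_apply, real_inner_comm]
  rw [h, integral_indicator measurableSet_Iic, integral_inner hf.integrableOn, real_inner_comm]

lemma integral_indicator_le_inner_right (hg : Integrable g ν) (u : ℝ) :
    ∫ s, {p : ℝ × ℝ | p.1 ≤ p.2}.indicator (fun p => ⟪f p.1, g p.2⟫) (u, s) ∂ν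
      = ⟪f u, ∫ s in Ici u, g s ∂ν⟫ := by
  have h : (fun s => {p : ℝ × ℝ | p.1 ≤ p.2}.indicator (fun p => ⟪f p.1, g p.2⟫) (u, s))
      = (Ici u).indicator fun s => ⟪f u, g s⟫ := by
    ext s; simp [indicator_apply]
  rw [h, integral_indicator measurableSet_Ici, integral_inner hg.integrableOn]

variable [SFinite μ] [SFinite ν]

lemma MeasureTheory.Integrable.inner_setIntegral_Iic (hf : Integrable f μ)
    (hg : Integrable g ν) :
    Integrable (fun s => ⟪∫ u in Iic s, f u ∂μ, g s⟫) ν := by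
  simpa only [integral_indicator_le_inner_left hf] using
    (integrable_indicator_le_inner hf hg).integral_prod_right

lemma integral_inner_setIntegral_Iic_eq (hf : Integrable f μ) (hg : Integrable g ν) :
    ∫ s, ⟪∫ u in Iic s, f u ∂μ, g s⟫ ∂ν = ∫ u, ⟪f u, ∫ s in Ici u, g s ∂ν⟫ ∂μ := by
  have hK := integrable_indicator_le_inner hf hg
  simp_rw [← integral_indicator_le_inner_left (g := g) hf,
    ← integral_indicator_le_inner_right (f := f) hg]
  rw [← integral_prod_symm _ hK, integral_prod _ hK]

lemma integral_inner_setIntegral_Iic_add [NullSingletonClass ν]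
    (hf : Integrable f μ) (hg : Integrable g ν) :
    ∫ s, ⟪∫ u in Iic s, f u ∂μ, g s⟫ ∂ν + ∫ s, ⟪∫ u in Iic s, g u ∂ν, f s⟫ ∂μ
      = ⟪∫ u, f u ∂μ, ∫ s, g s ∂ν⟫ := by
  have hIci : ∀ u, ⟪f u, ∫ s in Ici u, g s ∂ν⟫
      = ⟪∫ s, g s ∂ν, f u⟫ - ⟪∫ s in Iic u, g s ∂ν, f u⟫ := fun u => by
    rw [← inner_sub_left, real_inner_comm, integral_Iic_eq_integral_Iio' (measure_singleton u),
      ← compl_Ici, ← integral_add_compl measurableSet_Ici hg, add_sub_cancel_right]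
  rw [integral_inner_setIntegral_Iic_eq hf hg, integral_congr_ae (.of_forall hIci),
    integral_sub (hf.const_inner _) (hg.inner_setIntegral_Iic hf), sub_add_cancel,
    integral_inner hf, real_inner_comm]

omit [SFinite μ] [SFinite ν] in
lemma integral_inner_add_sub_left {α : Type*} [MeasurableSpace α] {ρ : Measure α}
    {F G h : α → E} (z : E) (hh : Integrable h ρ)
    (hF : Integrable (fun s => ⟪F s, h s⟫) ρ) (hG : Integrable (fun s => ⟪G s, h s⟫) ρ) :
    ∫ s, ⟪z + F s - G s, h s⟫ ∂ρ
      = ⟪z, ∫ s, h s ∂ρ⟫ + ∫ s, ⟪F s, h s⟫ ∂ρ - ∫ s, ⟪G s, h s⟫ ∂ρ := by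
  have hzF : Integrable (fun s => ⟪z, h s⟫ + ⟪F s, h s⟫) ρ := (hh.const_inner z).add hF
  simp only [inner_sub_left, inner_add_left]
  rw [integral_sub hzF hG, integral_add (hh.const_inner z) hF, integral_inner hh]

lemma norm_add_integral_sub_integral_sq [NullSingletonClass μ] [NullSingletonClass ν]
    (hf : Integrable f μ) (hg : Integrable g ν) (z : E) :
    ‖z + ∫ u, f u ∂μ - ∫ u, g u ∂ν‖ ^ 2 = ‖z‖ ^ 2
      + 2 * ∫ s, ⟪z + ∫ u in Iic s, f u ∂μ - ∫ u in Iic s, g u ∂ν, f s⟫ ∂μ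
      - 2 * ∫ s, ⟪z + ∫ u in Iic s, f u ∂μ - ∫ u in Iic s, g u ∂ν, g s⟫ ∂ν := by
  rw [integral_inner_add_sub_left z hf (hf.inner_setIntegral_Iic hf)
      (hg.inner_setIntegral_Iic hf),
    integral_inner_add_sub_left z hg (hf.inner_setIntegral_Iic hg)
      (hg.inner_setIntegral_Iic hg)]
  have hff := integral_inner_setIntegral_Iic_add hf hf
  have hgg := integral_inner_setIntegral_Iic_add hg hg
  have hfg := integral_inner_setIntegral_Iic_add hf hg
  have hexpand : ‖z + ∫ u, f u ∂μ - ∫ u, g u ∂ν‖ ^ 2 = ‖z‖ ^ 2 + 2 * ⟪z, ∫ u, f u ∂μ⟫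
      - 2 * ⟪z, ∫ u, g u ∂ν⟫ + ⟪∫ u, f u ∂μ, ∫ u, f u ∂μ⟫ + ⟪∫ u, g u ∂ν, ∫ u, g u ∂ν⟫
      - 2 * ⟪∫ u, f u ∂μ, ∫ u, g u ∂ν⟫ := by
    simp only [← real_inner_self_eq_norm_sq, inner_add_left, inner_sub_left, inner_add_right,
      inner_sub_right, real_inner_comm z, real_inner_comm (∫ u, f u ∂μ) (∫ u, g u ∂ν)]
    ring
  linarith

end

instance inst_s2 (l : ℝ → ℝ) (hm : Monotone l) (hc : Continuous l) :
    IsLocallyFiniteMeasure (lsMeasure l hm hc) :=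
  StieltjesFunction.instIsLocallyFiniteMeasure _

instance (l : ℝ → ℝ) (hm : Monotone l) (hc : Continuous l) :
    NullSingletonClass (lsMeasure l hm hc) where
  measure_singleton s := by
    rw [lsMeasure, StieltjesFunction.measure_singleton,
      (hc.continuousAt (x := s)).continuousWithinAt.leftLim_eq, sub_self, ENNReal.ofReal_zero]

lemma setIntegral_Iic_restrict_Ioc {E : Type*} [NormedAddCommGroup E] [NormedSpace ℝ E]
    {μ : Measure ℝ} {f : ℝ → E} {a s t : ℝ} (hs : s ≤ t) :
    ∫ u in Iic s, f u ∂(μ.restrict (Ioc a t)) = ∫ u in Ioc a s, f u ∂μ := by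
  rw [Measure.restrict_restrict measurableSet_Iic, Iic_inter_Ioc_of_le hs]

theorem ito_identity_difference_general {d : ℕ}
    {w : ℝ → EuclideanSpace ℝ (Fin d)}
    (x y : EuclideanSpace ℝ (Fin d))
    {l lam : ℝ → ℝ}
    (hl_mono : Monotone l) (hl_cont : Continuous l)
    (hlam_mono : Monotone lam) (hlam_cont : Continuous lam)
    {n m : ℝ → EuclideanSpace ℝ (Fin d)}
    (hn_meas : Measurable n) (hn_bdd : ∃ C, ∀ s, ‖n s‖ ≤ C)
    (hm_meas : Measurable m) (hm_bdd : ∃ C, ∀ s, ‖m s‖ ≤ C)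
    (X Y : ℝ → EuclideanSpace ℝ (Fin d))
    (hX : ∀ t, X t = x + w t + ∫ s in Ioc (0 : ℝ) t, n s ∂(lsMeasure l hl_mono hl_cont))
    (hY : ∀ t, Y t = y + w t +
      ∫ s in Ioc (0 : ℝ) t, m s ∂(lsMeasure lam hlam_mono hlam_cont)) :
    ∀ t, 0 ≤ t →
      ‖X t - Y t‖ ^ 2 = ‖x - y‖ ^ 2
        + 2 * ∫ s in Ioc (0 : ℝ) t, ⟪X s - Y s, n s⟫ ∂(lsMeasure l hl_mono hl_cont)
        - 2 * ∫ s in Ioc (0 : ℝ) t, ⟪X s - Y s, m s⟫ ∂(lsMeasure lam hlam_mono hlam_cont) := by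
  intro t _
  obtain ⟨Cn, hCn⟩ := hn_bdd
  obtain ⟨Cm, hCm⟩ := hm_bdd
  set μ := (lsMeasure l hl_mono hl_cont).restrict (Ioc 0 t)
  set ν := (lsMeasure lam hlam_mono hlam_cont).restrict (Ioc 0 t)
  have : IsFiniteMeasure μ := isFiniteMeasure_restrict.2 measure_Ioc_lt_top.ne
  have : IsFiniteMeasure ν := isFiniteMeasure_restrict.2 measure_Ioc_lt_top.ne
  have hn : Integrable n μ := .of_bound hn_meas.aestronglyMeasurable Cn (.of_forall hCn)
  have hm : Integrable m ν := .of_bound hm_meas.aestronglyMeasurable Cm (.of_forall hCm)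
  have hXY : ∀ s ∈ Ioc 0 t,
      X s - Y s = x - y + ∫ u in Iic s, n u ∂μ - ∫ u in Iic s, m u ∂ν := fun s hs => by
    rw [hX, hY, setIntegral_Iic_restrict_Ioc hs.2, setIntegral_Iic_restrict_Ioc hs.2]
    abel
  have hXYt : X t - Y t = x - y + ∫ u, n u ∂μ - ∫ u, m u ∂ν := by
    rw [hX, hY]
    abel
  have hcongr : ∀ (M : Measure ℝ) (h : ℝ → EuclideanSpace ℝ (Fin d)),
      ∫ s in Ioc 0 t, ⟪X s - Y s, h s⟫ ∂M
        = ∫ s in Ioc 0 t, ⟪x - y + ∫ u in Iic s, n u ∂μ - ∫ u in Iic s, m u ∂ν, h s⟫ ∂M :=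
    fun M h => setIntegral_congr_fun measurableSet_Ioc fun s hs => by rw [hXY s hs]
  rw [hXYt, hcongr, hcongr, norm_add_integral_sub_integral_sq hn hm]

/-- Deterministic Itô-type identity for differences of paths of bounded variation:
if `X t = x + w t + ∫₀ᵗ n dl` and `Y t = y + w t + ∫₀ᵗ m dλ` where `l, λ` are
continuous nondecreasing functions vanishing on `(-∞, 0]` and `n, m` are bounded
Borel maps, then for all `t ≥ 0`,
`‖X t − Y t‖² = ‖x − y‖² + 2∫₀ᵗ ⟪X − Y, n⟫ dl − 2∫₀ᵗ ⟪X − Y, m⟫ dλ`. -/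
theorem ito_identity_difference {d : ℕ}
    {w : ℝ → EuclideanSpace ℝ (Fin d)} (hw : ContinuousOn w (Ici 0))
    (x y : EuclideanSpace ℝ (Fin d))
    {l lam : ℝ → ℝ}
    (hl_mono : Monotone l) (hl_cont : Continuous l) (hl_zero : ∀ t ≤ (0 : ℝ), l t = 0)
    (hlam_mono : Monotone lam) (hlam_cont : Continuous lam)
    (hlam_zero : ∀ t ≤ (0 : ℝ), lam t = 0)
    {n m : ℝ → EuclideanSpace ℝ (Fin d)}
    (hn_meas : Measurable n) (hn_bdd : ∃ C, ∀ s, ‖n s‖ ≤ C)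
    (hm_meas : Measurable m) (hm_bdd : ∃ C, ∀ s, ‖m s‖ ≤ C)
    (X Y : ℝ → EuclideanSpace ℝ (Fin d))
    (hX : ∀ t, X t = x + w t + ∫ s in Ioc (0 : ℝ) t, n s ∂(lsMeasure l hl_mono hl_cont))
    (hY : ∀ t, Y t = y + w t +
      ∫ s in Ioc (0 : ℝ) t, m s ∂(lsMeasure lam hlam_mono hlam_cont)) :
    ∀ t, 0 ≤ t →
      ‖X t - Y t‖ ^ 2 = ‖x - y‖ ^ 2
        + 2 * ∫ s in Ioc (0 : ℝ) t, ⟪X s - Y s, n s⟫ ∂(lsMeasure l hl_mono hl_cont)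
        - 2 * ∫ s in Ioc (0 : ℝ) t, ⟪X s - Y s, m s⟫ ∂(lsMeasure lam hlam_mono hlam_cont) :=
  ito_identity_difference_general x y hl_mono hl_cont hlam_mono hlam_cont hn_meas hn_bdd hm_meas
    hm_bdd X Y hX hY
end

section
/- Let Ω ⊂ ℝ^d be a compact convex set with nonempty interior, let (E, 𝓕, μ) be a probability space, and let Φ : Ω × E → Ω be such that Φ(·, ω) is 1-Lipschitz for every ω ∈ E and Φ(x, ·) is measurable for every x ∈ Ω. For continuous f : Ω → ℝ define (Pf)(x) = ∫_E f(Φ(x, ω)) dμ(ω). Then: (a) if f is Lipschitz with constant L, so is Pf; and (b) if f is C¹ on Ω (continuous on Ω, differentiable on the interior, with gradient extending continuously to Ω), then at every interior point x at which Pf is differentiable, |∇Pf(x)| ≤ (P|∇f|)(x). -/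
/-!
Coupling all starting points through the same `ω`, `Pf(x) - Pf(y)` is the integral of
`f(Φ(x, ω)) - f(Φ(y, ω))`, and `‖Φ(x, ω) - Φ(y, ω)‖ ≤ ‖x - y‖`. Part (a) follows at once. For (b),
the gradient of `f` extends continuously to the boundary, so the mean value inequality holds on
all of `Ω`; uniform continuity of `∇f` then gives `|f b - f a| ≤ (|∇f(a)| + ε) ‖b - a‖` for
nearby `a, b ∈ Ω`. Integrating this along the coupling bounds the local Lipschitz constant of
`Pf` at `x` by `P|∇f|(x) + ε`, and a derivative is bounded by any local Lipschitz constant.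
-/

open MeasureTheory Set Filter Topology InnerProductSpace

theorem ContinuousOn.integrable_comp_of_isCompact {E X : Type*} [MeasurableSpace E]
    {μ : Measure E} [IsFiniteMeasure μ] [TopologicalSpace X] [MeasurableSpace X]
    [OpensMeasurableSpace X] {K : Set X} (hK : IsCompact K) {g : X → ℝ} (hg : ContinuousOn g K)
    {φ : E → X} (hφ : Measurable φ) (hφK : ∀ ω, φ ω ∈ K) :
    Integrable (fun ω => g (φ ω)) μ := by
  obtain ⟨M, hM⟩ := hK.exists_bound_of_continuousOn hg
  have hmeas : Measurable fun ω => g (φ ω) :=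
    (continuousOn_iff_continuous_domRestrict.mp hg).measurable.comp (hφ.subtype_mk (h := hφK))
  exact .of_bound hmeas.aestronglyMeasurable M (ae_of_all _ fun ω => hM _ (hφK ω))

section Derivative

variable {E F : Type*} [NormedAddCommGroup E] [NormedSpace ℝ E] [NormedAddCommGroup F]
  [NormedSpace ℝ F] {Ω : Set E} {f : E → F} {f' : E → E →L[ℝ] F}

theorem Convex.hasFDerivWithinAt_of_hasFDerivAt_interior (hconv : Convex ℝ Ω)
    (hclosed : IsClosed Ω) (hint : (interior Ω).Nonempty) (hf : ContinuousOn f Ω)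
    (hf' : ContinuousOn f' Ω) (hderiv : ∀ x ∈ interior Ω, HasFDerivAt f (f' x) x)
    {x : E} (hx : x ∈ Ω) : HasFDerivWithinAt f (f' x) Ω x := by
  have hcl : closure (interior Ω) = Ω := by
    rw [hconv.closure_interior_eq_closure_of_nonempty_interior hint, hclosed.closure_eq]
  have hlim : Tendsto (fderiv ℝ f) (𝓝[interior Ω] x) (𝓝 (f' x)) :=
    ((hf' x hx).tendsto.mono_left (nhdsWithin_mono _ interior_subset)).congr'
      (eventually_nhdsWithin_of_forall fun y hy => (hderiv y hy).fderiv.symm)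
  have := hasFDerivWithinAt_closure_of_tendsto_fderiv
    (fun y hy => (hderiv y hy).differentiableAt.differentiableWithinAt) hconv.interior
    isOpen_interior (fun y hy => (hf y (hcl ▸ hy)).mono interior_subset) hlim
  rwa [hcl] at this

theorem IsCompact.exists_pos_norm_image_sub_le (hcomp : IsCompact Ω) (hconv : Convex ℝ Ω)
    (hderiv : ∀ x ∈ Ω, HasFDerivWithinAt f (f' x) Ω x) (hf' : ContinuousOn f' Ω)
    {ε : ℝ} (hε : 0 < ε) :
    ∃ δ > 0, ∀ a ∈ Ω, ∀ b ∈ Ω, ‖b - a‖ < δ → ‖f b - f a‖ ≤ (‖f' a‖ + ε) * ‖b - a‖ := by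
  obtain ⟨δ, hδ, hclose⟩ :=
    Metric.uniformContinuousOn_iff.mp (hcomp.uniformContinuousOn_of_continuous hf') ε hε
  refine ⟨δ, hδ, fun a ha b hb hab => ?_⟩
  have hbound : ∀ w ∈ Ω ∩ Metric.ball a δ, ‖f' w‖ ≤ ‖f' a‖ + ε := fun w hw => by
    have := hclose w hw.1 a ha (Metric.mem_ball.mp hw.2)
    rw [dist_eq_norm] at this
    linarith [norm_le_norm_add_norm_sub' (f' w) (f' a)]
  exact (hconv.inter (convex_ball a δ)).norm_image_sub_le_of_norm_hasFDerivWithin_le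
    (fun w hw => (hderiv w hw.1).mono inter_subset_left) hbound
    ⟨ha, Metric.mem_ball_self hδ⟩ ⟨hb, mem_ball_iff_norm.mpr hab⟩

end Derivative

section MarkovOperator

variable {E V : Type*} [MeasurableSpace E] {μ : Measure E} [IsProbabilityMeasure μ]
  [NormedAddCommGroup V] [MeasurableSpace V] [OpensMeasurableSpace V] {Ω : Set V}
  {Φ : V → E → V}

variable (μ Φ) in
noncomputable def markovOperator (f : V → ℝ) (x : V) : ℝ :=
  ∫ ω, f (Φ x ω) ∂μ

theorem abs_markovOperator_sub_le (hΩ : IsCompact Ω) (hΦmaps : ∀ x ∈ Ω, ∀ ω, Φ x ω ∈ Ω)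
    (hΦmeas : ∀ x ∈ Ω, Measurable fun ω => Φ x ω) {f : V → ℝ} (hf : ContinuousOn f Ω)
    {x y : V} (hx : x ∈ Ω) (hy : y ∈ Ω) {g : E → ℝ} (hg : Integrable g μ)
    (hfg : ∀ ω, |f (Φ x ω) - f (Φ y ω)| ≤ g ω) :
    |markovOperator μ Φ f x - markovOperator μ Φ f y| ≤ ∫ ω, g ω ∂μ := by
  have hintx := hf.integrable_comp_of_isCompact (μ := μ) hΩ (hΦmeas x hx) (hΦmaps x hx)
  have hinty := hf.integrable_comp_of_isCompact (μ := μ) hΩ (hΦmeas y hy) (hΦmaps y hy)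
  rw [markovOperator, markovOperator, ← integral_sub hintx hinty]
  exact (abs_integral_le_integral_abs).trans (integral_mono (hintx.sub hinty).abs hg hfg)

theorem abs_markovOperator_sub_le_mul (hΩ : IsCompact Ω) (hΦmaps : ∀ x ∈ Ω, ∀ ω, Φ x ω ∈ Ω)
    (hΦlip : ∀ ω, ∀ x ∈ Ω, ∀ y ∈ Ω, ‖Φ x ω - Φ y ω‖ ≤ ‖x - y‖)
    (hΦmeas : ∀ x ∈ Ω, Measurable fun ω => Φ x ω) {f : V → ℝ} {L : ℝ} (hf : ContinuousOn f Ω)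
    (hL : ∀ x ∈ Ω, ∀ y ∈ Ω, |f x - f y| ≤ L * ‖x - y‖) {x y : V} (hx : x ∈ Ω) (hy : y ∈ Ω) :
    |markovOperator μ Φ f x - markovOperator μ Φ f y| ≤ L * ‖x - y‖ := by
  rcases eq_or_ne x y with rfl | hne
  · simp
  have hL0 : 0 ≤ L := by
    have := (abs_nonneg _).trans (hL x hx y hy)
    exact nonneg_of_mul_nonneg_left this (norm_pos_iff.mpr (sub_ne_zero.mpr hne))
  have hpt : ∀ ω, |f (Φ x ω) - f (Φ y ω)| ≤ L * ‖x - y‖ := fun ω =>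
    (hL _ (hΦmaps x hx ω) _ (hΦmaps y hy ω)).trans
      (mul_le_mul_of_nonneg_left (hΦlip ω x hx y hy) hL0)
  simpa using abs_markovOperator_sub_le (μ := μ) hΩ hΦmaps hΦmeas hf hx hy (integrable_const _) hpt

theorem exists_pos_abs_markovOperator_sub_le [NormedSpace ℝ V] (hΩ : IsCompact Ω)
    (hΩconv : Convex ℝ Ω) (hΦmaps : ∀ x ∈ Ω, ∀ ω, Φ x ω ∈ Ω)
    (hΦlip : ∀ ω, ∀ x ∈ Ω, ∀ y ∈ Ω, ‖Φ x ω - Φ y ω‖ ≤ ‖x - y‖)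
    (hΦmeas : ∀ x ∈ Ω, Measurable fun ω => Φ x ω) {f : V → ℝ} {f' : V → V →L[ℝ] ℝ}
    (hf : ContinuousOn f Ω) (hf' : ContinuousOn f' Ω)
    (hderiv : ∀ x ∈ Ω, HasFDerivWithinAt f (f' x) Ω x) {x : V} (hx : x ∈ Ω) {ε : ℝ}
    (hε : 0 < ε) :
    ∃ δ > 0, ∀ y ∈ Ω, ‖y - x‖ < δ → |markovOperator μ Φ f y - markovOperator μ Φ f x| ≤
      (markovOperator μ Φ (fun z => ‖f' z‖) x + ε) * ‖y - x‖ := by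
  obtain ⟨δ, hδ, hmvt⟩ := hΩ.exists_pos_norm_image_sub_le hΩconv hderiv hf' hε
  refine ⟨δ, hδ, fun y hy hyx => ?_⟩
  have hint : Integrable (fun ω => ‖f' (Φ x ω)‖) μ :=
    hf'.norm.integrable_comp_of_isCompact hΩ (hΦmeas x hx) (hΦmaps x hx)
  have hpt : ∀ ω, |f (Φ y ω) - f (Φ x ω)| ≤ (‖f' (Φ x ω)‖ + ε) * ‖y - x‖ := fun ω => by
    have hclose := hΦlip ω y hy x hx
    calc |f (Φ y ω) - f (Φ x ω)| ≤ (‖f' (Φ x ω)‖ + ε) * ‖Φ y ω - Φ x ω‖ :=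
          hmvt _ (hΦmaps x hx ω) _ (hΦmaps y hy ω) (hclose.trans_lt hyx)
      _ ≤ (‖f' (Φ x ω)‖ + ε) * ‖y - x‖ := by gcongr
  calc |markovOperator μ Φ f y - markovOperator μ Φ f x|
      ≤ ∫ ω, (‖f' (Φ x ω)‖ + ε) * ‖y - x‖ ∂μ :=
        abs_markovOperator_sub_le hΩ hΦmaps hΦmeas hf hy hx
          ((hint.add (integrable_const ε)).mul_const _) hpt
    _ = (markovOperator μ Φ (fun z => ‖f' z‖) x + ε) * ‖y - x‖ := by
        rw [integral_mul_const, integral_add hint (integrable_const ε), integral_const]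
        simp [markovOperator]

end MarkovOperator

theorem markov_gradient_contraction_general {d : ℕ} {E : Type*} [MeasurableSpace E]
    (μ : Measure E) [IsProbabilityMeasure μ]
    {Ω : Set (EuclideanSpace ℝ (Fin d))}
    (hΩcomp : IsCompact Ω) (hΩconv : Convex ℝ Ω)
    (Φ : EuclideanSpace ℝ (Fin d) → E → EuclideanSpace ℝ (Fin d))
    (hΦmaps : ∀ x ∈ Ω, ∀ ω, Φ x ω ∈ Ω)
    (hΦlip : ∀ ω, ∀ x ∈ Ω, ∀ y ∈ Ω, ‖Φ x ω - Φ y ω‖ ≤ ‖x - y‖)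
    (hΦmeas : ∀ x ∈ Ω, Measurable fun ω => Φ x ω) :
    (∀ (f : EuclideanSpace ℝ (Fin d) → ℝ) (L : ℝ), ContinuousOn f Ω →
      (∀ x ∈ Ω, ∀ y ∈ Ω, |f x - f y| ≤ L * ‖x - y‖) →
      ∀ x ∈ Ω, ∀ y ∈ Ω,
        |(∫ ω, f (Φ x ω) ∂μ) - ∫ ω, f (Φ y ω) ∂μ| ≤ L * ‖x - y‖) ∧
    (∀ (f : EuclideanSpace ℝ (Fin d) → ℝ)
        (gf : EuclideanSpace ℝ (Fin d) → EuclideanSpace ℝ (Fin d)),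
      ContinuousOn f Ω → ContinuousOn gf Ω →
      (∀ x ∈ interior Ω, HasGradientAt f (gf x) x) →
      ∀ x ∈ interior Ω, ∀ G, HasGradientAt (fun z => ∫ ω, f (Φ z ω) ∂μ) G x →
        ‖G‖ ≤ ∫ ω, ‖gf (Φ x ω)‖ ∂μ) := by
  refine ⟨fun f L hf hL x hx y hy =>
    abs_markovOperator_sub_le_mul hΩcomp hΦmaps hΦlip hΦmeas hf hL hx hy, ?_⟩
  intro f gf hf hgf hgrad x hx G hG
  set toDualE := toDual ℝ (EuclideanSpace ℝ (Fin d))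
  have hderiv : ∀ y ∈ Ω, HasFDerivWithinAt f (toDualE (gf y)) Ω y :=
    fun y hy => hΩconv.hasFDerivWithinAt_of_hasFDerivAt_interior hΩcomp.isClosed ⟨x, hx⟩ hf
      (toDualE.continuous.comp_continuousOn hgf) (fun z hz => (hgrad z hz).hasFDerivAt) hy
  refine le_of_forall_pos_le_add fun ε hε => ?_
  obtain ⟨δ, hδ, hbound⟩ := exists_pos_abs_markovOperator_sub_le (μ := μ) hΩcomp hΩconv hΦmaps
    hΦlip hΦmeas hf (toDualE.continuous.comp_continuousOn hgf) hderiv (interior_subset hx) hε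
  have hlip : ∀ᶠ y in 𝓝 x, ‖(∫ ω, f (Φ y ω) ∂μ) - ∫ ω, f (Φ x ω) ∂μ‖ ≤
      (∫ ω, ‖gf (Φ x ω)‖ ∂μ + ε) * ‖y - x‖ := by
    filter_upwards [isOpen_interior.mem_nhds hx, Metric.ball_mem_nhds x hδ] with y hy hyδ
    simpa [markovOperator, toDualE] using
      hbound y (interior_subset hy) (mem_ball_iff_norm.mp hyδ)
  simpa [toDualE] using hG.hasFDerivAt.le_of_lip' (by positivity) hlip

/-- Gradient contraction for a Markov operator given by a measurable family of
`1`-Lipschitz maps of a compact convex set `Ω ⊂ ℝ^d` into itself: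
with `(Pf)(x) = ∫_E f(Φ(x, ω)) dμ(ω)` for a probability measure `μ`,
(a) `P` preserves Lipschitz constants of Lipschitz functions, and
(b) if `f` is `C¹` on `Ω` with gradient `gf` (continuous on `Ω`), then at every
interior point `x` at which `Pf` has a gradient `G`, `‖G‖ ≤ (P‖gf‖)(x)`. -/
theorem markov_gradient_contraction {d : ℕ} {E : Type*} [MeasurableSpace E]
    (μ : Measure E) [IsProbabilityMeasure μ]
    {Ω : Set (EuclideanSpace ℝ (Fin d))}
    (hΩcomp : IsCompact Ω) (hΩconv : Convex ℝ Ω) (hΩint : (interior Ω).Nonempty)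
    (Φ : EuclideanSpace ℝ (Fin d) → E → EuclideanSpace ℝ (Fin d))
    (hΦmaps : ∀ x ∈ Ω, ∀ ω, Φ x ω ∈ Ω)
    (hΦlip : ∀ ω, ∀ x ∈ Ω, ∀ y ∈ Ω, ‖Φ x ω - Φ y ω‖ ≤ ‖x - y‖)
    (hΦmeas : ∀ x ∈ Ω, Measurable fun ω => Φ x ω) :
    (∀ (f : EuclideanSpace ℝ (Fin d) → ℝ) (L : ℝ), ContinuousOn f Ω →
      (∀ x ∈ Ω, ∀ y ∈ Ω, |f x - f y| ≤ L * ‖x - y‖) →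
      ∀ x ∈ Ω, ∀ y ∈ Ω,
        |(∫ ω, f (Φ x ω) ∂μ) - ∫ ω, f (Φ y ω) ∂μ| ≤ L * ‖x - y‖) ∧
    (∀ (f : EuclideanSpace ℝ (Fin d) → ℝ)
        (gf : EuclideanSpace ℝ (Fin d) → EuclideanSpace ℝ (Fin d)),
      ContinuousOn f Ω → ContinuousOn gf Ω →
      (∀ x ∈ interior Ω, HasGradientAt f (gf x) x) →
      ∀ x ∈ interior Ω, ∀ G, HasGradientAt (fun z => ∫ ω, f (Φ z ω) ∂μ) G x →
        ‖G‖ ≤ ∫ ω, ‖gf (Φ x ω)‖ ∂μ) :=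
  markov_gradient_contraction_general μ hΩcomp hΩconv Φ hΦmaps hΦlip hΦmeas
end

section
/- Let Ω ⊂ ℝ^d be a compact convex set with nonempty interior, and let (P_s)_{s≥0} be a family of linear operators on C(Ω) such that P_0 is the identity, P_{s+u} = P_s ∘ P_u for all s, u ≥ 0, each P_s is positivity-preserving (f ≥ 0 implies P_s f ≥ 0), and P_s 1 = 1. Fix t > 0 and f ∈ C(Ω), and assume: (i) for every u ∈ [0, t], the function P_u f is C¹ on Ω (continuous on Ω, differentiable on the interior, gradient extending continuously to Ω); (ii) for every s ∈ [0, t] and every u ∈ [0, t], the gradient contraction |∇P_s(P_u f)(x)| ≤ (P_s|∇P_u f|)(x) holds at every interior point x; (iii) for every x ∈ Ω, the function s ↦ (P_s((P_{t−s} f)²))(x) is continuous on [0, t] and differentiable on (0, t) with derivative (P_s(|∇P_{t−s} f|²))(x). Then at every interior point x of Ω, t · |∇P_t f(x)|² ≤ (P_t f²)(x) − ((P_t f)(x))². -/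
/-!
Along the interpolation `φ(s) = P_s((P_{t−s} f)²)(x)` one has `φ(0) = (P_t f)²(x)`,
`φ(t) = P_t(f²)(x)` and `φ'(s) = P_s(|∇P_{t−s} f|²)(x)`. Writing `P_t f = P_s(P_{t−s} f)`,
the gradient contraction and Jensen's inequality `(P_s h)² ≤ P_s(h²)` give
`|∇P_t f(x)|² ≤ φ'(s)` for every `s ∈ (0, t)`; the mean value inequality then yields
`t · |∇P_t f(x)|² ≤ φ(t) − φ(0)`.
-/

open Set

theorem sq_map_le_map_sq {X : Type*} (L : (X → ℝ) → ℝ)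
    (hlin : ∀ (f g : X → ℝ) (a b : ℝ), L (fun y => a * f y + b * g y) = a * L f + b * L g)
    (hpos : ∀ f, 0 ≤ f → 0 ≤ L f) (hone : L (fun _ => 1) = 1) (h : X → ℝ) :
    L h ^ 2 ≤ L (fun y => h y ^ 2) := by
  set A := L h
  have hexpand : (fun y => (h y - A) ^ 2)
      = fun y => 1 * (1 * h y ^ 2 + (-(2 * A)) * h y) + A ^ 2 * 1 := by
    funext y; ring
  have hvar : 0 ≤ L (fun y => (h y - A) ^ 2) := hpos _ fun y => sq_nonneg _
  rw [hexpand, hlin, hone, hlin] at hvar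
  linarith

theorem sq_norm_gradient_le_of_gradient_contraction {E : Type*} [NormedAddCommGroup E]
    [InnerProductSpace ℝ E] [CompleteSpace E] {Ω : Set E} (P : ℝ → (E → ℝ) → E → ℝ)
    (hPsg : ∀ s ≥ (0 : ℝ), ∀ u ≥ (0 : ℝ), ∀ f, ∀ x ∈ Ω, P (s + u) f x = P s (P u f) x)
    (hPlin : ∀ s ≥ (0 : ℝ), ∀ (f g : E → ℝ) (a b : ℝ), ∀ x ∈ Ω,
      P s (fun y => a * f y + b * g y) x = a * P s f x + b * P s g x)
    (hPpos : ∀ s ≥ (0 : ℝ), ∀ f, (∀ y ∈ Ω, 0 ≤ f y) → ∀ x ∈ Ω, 0 ≤ P s f x)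
    (hPone : ∀ s ≥ (0 : ℝ), ∀ x ∈ Ω, P s (fun _ => (1 : ℝ)) x = 1)
    {f : E → ℝ} {t s : ℝ} (hs : s ∈ Icc 0 t) (g : E → E) {x G : E} (hx : x ∈ interior Ω)
    (hgc : HasGradientAt (P s (P (t - s) f)) G x → ‖G‖ ≤ P s (fun y => ‖g y‖) x)
    (hG : HasGradientAt (P t f) G x) :
    ‖G‖ ^ 2 ≤ P s (fun y => ‖g y‖ ^ 2) x := by
  have hxΩ : x ∈ Ω := interior_subset hx
  have hsplit : P s (P (t - s) f) =ᶠ[nhds x] P t f := by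
    filter_upwards [isOpen_interior.mem_nhds hx] with y hy
    rw [← hPsg s hs.1 (t - s) (sub_nonneg.2 hs.2) f y (interior_subset hy), add_sub_cancel]
  have hcontr : ‖G‖ ≤ P s (fun y => ‖g y‖) x := hgc (hG.congr_of_eventuallyEq hsplit)
  have hjensen := sq_map_le_map_sq (fun h => P s h x) (fun f g a b => hPlin s hs.1 f g a b x hxΩ)
    (fun h hh => hPpos s hs.1 h (fun y _ => hh y) x hxΩ) (hPone s hs.1 x hxΩ) (fun y => ‖g y‖)
  exact (pow_le_pow_left₀ (norm_nonneg G) hcontr 2).trans hjensen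

theorem bakry_emery_of_gradient_contraction_general {d : ℕ}
    {Ω : Set (EuclideanSpace ℝ (Fin d))}
    (P : ℝ → (EuclideanSpace ℝ (Fin d) → ℝ) → EuclideanSpace ℝ (Fin d) → ℝ)
    (hP0 : ∀ f, ∀ x ∈ Ω, P 0 f x = f x)
    (hPsg : ∀ s ≥ (0 : ℝ), ∀ u ≥ (0 : ℝ), ∀ f, ∀ x ∈ Ω, P (s + u) f x = P s (P u f) x)
    (hPlin : ∀ s ≥ (0 : ℝ), ∀ (f g : EuclideanSpace ℝ (Fin d) → ℝ) (a b : ℝ), ∀ x ∈ Ω,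
      P s (fun y => a * f y + b * g y) x = a * P s f x + b * P s g x)
    (hPloc : ∀ s ≥ (0 : ℝ), ∀ f g, (∀ y ∈ Ω, f y = g y) → ∀ x ∈ Ω, P s f x = P s g x)
    (hPpos : ∀ s ≥ (0 : ℝ), ∀ f, (∀ y ∈ Ω, 0 ≤ f y) → ∀ x ∈ Ω, 0 ≤ P s f x)
    (hPone : ∀ s ≥ (0 : ℝ), ∀ x ∈ Ω, P s (fun _ => (1 : ℝ)) x = 1)
    {t : ℝ} (ht : 0 < t)
    (f : EuclideanSpace ℝ (Fin d) → ℝ)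
    (g : ℝ → EuclideanSpace ℝ (Fin d) → EuclideanSpace ℝ (Fin d))
    (hgc : ∀ s ∈ Icc (0 : ℝ) t, ∀ u ∈ Icc (0 : ℝ) t, ∀ x ∈ interior Ω, ∀ G,
      HasGradientAt (P s (P u f)) G x → ‖G‖ ≤ P s (fun y => ‖g u y‖) x)
    (hder : ∀ x ∈ Ω,
      ContinuousOn (fun s => P s (fun y => (P (t - s) f y) ^ 2) x) (Icc (0 : ℝ) t) ∧
      ∀ s ∈ Ioo (0 : ℝ) t,
        HasDerivAt (fun r => P r (fun y => (P (t - r) f y) ^ 2) x)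
          (P s (fun y => ‖g (t - s) y‖ ^ 2) x) s) :
    ∀ x ∈ interior Ω, ∀ G, HasGradientAt (P t f) G x →
      t * ‖G‖ ^ 2 ≤ P t (fun y => f y ^ 2) x - (P t f x) ^ 2 := by
  intro x hx G hG
  have hxΩ : x ∈ Ω := interior_subset hx
  obtain ⟨hφcont, hφder⟩ := hder x hxΩ
  have hslope : ∀ s ∈ interior (Icc 0 t),
      ‖G‖ ^ 2 ≤ deriv (fun r => P r (fun y => (P (t - r) f y) ^ 2) x) s := by
    rw [interior_Icc]
    intro s hs
    rw [(hφder s hs).deriv]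
    exact sq_norm_gradient_le_of_gradient_contraction P hPsg hPlin hPpos hPone
      (Ioo_subset_Icc_self hs) (g (t - s)) hx (hgc s (Ioo_subset_Icc_self hs) (t - s)
        ⟨sub_nonneg.2 hs.2.le, sub_le_self t hs.1.le⟩ x hx G) hG
  have hdiff : DifferentiableOn ℝ (fun r => P r (fun y => (P (t - r) f y) ^ 2) x)
      (interior (Icc 0 t)) := by
    rw [interior_Icc]
    exact fun s hs => (hφder s hs).differentiableAt.differentiableWithinAt
  have hmvt := (convex_Icc 0 t).mul_sub_le_image_sub_of_le_deriv hφcont hdiff hslope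
    0 (left_mem_Icc.2 ht.le) t (right_mem_Icc.2 ht.le) ht.le
  have hstart : P 0 (fun y => (P (t - 0) f y) ^ 2) x = P t f x ^ 2 := by
    rw [sub_zero, hP0 _ x hxΩ]
  have hend : P t (fun y => (P (t - t) f y) ^ 2) x = P t (fun y => f y ^ 2) x :=
    hPloc t ht.le _ _ (fun y hy => by rw [sub_self, hP0 f y hy]) x hxΩ
  rw [hstart, hend, sub_zero, mul_comm] at hmvt
  exact hmvt

/-- Bakry–Émery type inequality `t·‖∇P_t f‖² ≤ P_t f² − (P_t f)²` for a Markov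
semigroup `(P_s)` of positivity-preserving unital linear operators on `C(Ω)`,
`Ω ⊂ ℝ^d` compact convex with nonempty interior. Here `g u` denotes the
(continuous extension to `Ω` of the) gradient of `P_u f`, `hC1` says that each
`P_u f` (for `u ∈ [0,t]`) is `C¹` on `Ω`, `hgc` is the gradient contraction
`‖∇P_s(P_u f)‖ ≤ P_s‖∇P_u f‖` on the interior, and `hder` says that for each `x`
the map `s ↦ P_s((P_{t−s}f)²)(x)` is continuous on `[0,t]` and differentiable on
`(0,t)` with derivative `P_s(‖∇P_{t−s}f‖²)(x)`. -/
theorem bakry_emery_of_gradient_contraction {d : ℕ}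
    {Ω : Set (EuclideanSpace ℝ (Fin d))}
    (hΩcomp : IsCompact Ω) (hΩconv : Convex ℝ Ω) (hΩint : (interior Ω).Nonempty)
    (P : ℝ → (EuclideanSpace ℝ (Fin d) → ℝ) → EuclideanSpace ℝ (Fin d) → ℝ)
    (hP0 : ∀ f, ∀ x ∈ Ω, P 0 f x = f x)
    (hPsg : ∀ s ≥ (0 : ℝ), ∀ u ≥ (0 : ℝ), ∀ f, ∀ x ∈ Ω, P (s + u) f x = P s (P u f) x)
    (hPlin : ∀ s ≥ (0 : ℝ), ∀ (f g : EuclideanSpace ℝ (Fin d) → ℝ) (a b : ℝ), ∀ x ∈ Ω,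
      P s (fun y => a * f y + b * g y) x = a * P s f x + b * P s g x)
    (hPloc : ∀ s ≥ (0 : ℝ), ∀ f g, (∀ y ∈ Ω, f y = g y) → ∀ x ∈ Ω, P s f x = P s g x)
    (hPpos : ∀ s ≥ (0 : ℝ), ∀ f, (∀ y ∈ Ω, 0 ≤ f y) → ∀ x ∈ Ω, 0 ≤ P s f x)
    (hPone : ∀ s ≥ (0 : ℝ), ∀ x ∈ Ω, P s (fun _ => (1 : ℝ)) x = 1)
    (hPcont : ∀ s ≥ (0 : ℝ), ∀ f, ContinuousOn f Ω → ContinuousOn (P s f) Ω)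
    {t : ℝ} (ht : 0 < t)
    (f : EuclideanSpace ℝ (Fin d) → ℝ) (hf : ContinuousOn f Ω)
    (g : ℝ → EuclideanSpace ℝ (Fin d) → EuclideanSpace ℝ (Fin d))
    (hC1 : ∀ u ∈ Icc (0 : ℝ) t, ContinuousOn (P u f) Ω ∧ ContinuousOn (g u) Ω ∧
      ∀ x ∈ interior Ω, HasGradientAt (P u f) (g u x) x)
    (hgc : ∀ s ∈ Icc (0 : ℝ) t, ∀ u ∈ Icc (0 : ℝ) t, ∀ x ∈ interior Ω, ∀ G,
      HasGradientAt (P s (P u f)) G x → ‖G‖ ≤ P s (fun y => ‖g u y‖) x)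
    (hder : ∀ x ∈ Ω,
      ContinuousOn (fun s => P s (fun y => (P (t - s) f y) ^ 2) x) (Icc (0 : ℝ) t) ∧
      ∀ s ∈ Ioo (0 : ℝ) t,
        HasDerivAt (fun r => P r (fun y => (P (t - r) f y) ^ 2) x)
          (P s (fun y => ‖g (t - s) y‖ ^ 2) x) s) :
    ∀ x ∈ interior Ω, ∀ G, HasGradientAt (P t f) G x →
      t * ‖G‖ ^ 2 ≤ P t (fun y => f y ^ 2) x - (P t f x) ^ 2 :=
  bakry_emery_of_gradient_contraction_general P hP0 hPsg hPlin hPloc hPpos hPone ht f g hgc hder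
end

section
/- Let Ω ⊂ ℝ^d be a compact convex set with nonempty interior, equipped with the Lebesgue measure. Let (P_t)_{t≥0} be a family of linear operators on the bounded Borel functions on Ω with P_0 the identity, P_{t+s} = P_t ∘ P_s, each P_t positivity-preserving, P_t 1 = 1, and ∫_Ω P_t f(x) dx = ∫_Ω f(x) dx for all t and all bounded Borel f. Assume there are constants λ > 0 and C₁, C₂ > 0 such that: (i) ‖P_t f‖_{L²(Ω)} ≤ e^{−λt} ‖f‖_{L²(Ω)} for all t ≥ 0 and all bounded Borel f with ∫_Ω f = 0; (ii) ‖P_t f‖_∞ ≤ C₁ t^{−d/2} ‖f‖_{L¹(Ω)} for all t ∈ (0, 1]; (iii) for all t ∈ (0, 1], P_t f is differentiable on the interior of Ω and sup over interior x of |∇P_t f(x)| is at most C₂ t^{−(d+1)/2} ‖f‖_{L¹(Ω)}. Then there exists a constant C₃ > 0 such that for every t > 0 and every bounded Borel f, P_t f is differentiable on the interior of Ω and sup over interior x of |∇P_t f(x)| is at most C₃ t^{−(d+1)/2} ‖f‖_{L¹(Ω)}. -/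
open MeasureTheory Set Real
open scoped Gradient

/-!
For `t ≤ 1` the bound is hypothesis (iii). For `t > 1` write `f = m + g` with `m` the mean of `f`
over `Ω`, so that `g` has mean zero and `‖g‖₁ ≤ 2‖f‖₁`, and split
`P_t f = m + P_{1/2} P_{t-1} P_{1/2} g` on `Ω`. Reading right to left: `P_{1/2}` maps `L¹` to `L^∞`,
hence into `L²` (ii); `P_{t-1}` contracts mean-zero functions in `L²` by `e^{-λ(t-1)}` (i), and
`L²` embeds into `L¹` since `Ω` has finite measure; the last `P_{1/2}` maps `L¹` to gradients
bounded by a constant (iii). The exponential `e^{-λ(t-1)}` is then dominated by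
`t^{-(d+1)/2}` up to a constant.
-/

section FiniteMeasure

variable {α : Type*} [MeasurableSpace α] {μ : Measure α} [IsFiniteMeasure μ]

theorem memLp_of_abs_le {f : α → ℝ} (hf : Measurable f) (hfb : ∃ M, ∀ y, |f y| ≤ M)
    (p : ENNReal) : MemLp f p μ :=
  let ⟨M, hM⟩ := hfb
  MemLp.of_bound hf.aestronglyMeasurable M (ae_of_all _ hM)

theorem integral_abs_le_sqrt_measureReal_mul_sqrt_integral_sq {u : α → ℝ} (hu : MemLp u 2 μ) :
    ∫ x, |u x| ∂μ ≤ √(μ.real univ) * √(∫ x, u x ^ 2 ∂μ) := by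
  have hu' : MemLp (fun x => |u x|) (ENNReal.ofReal 2) μ := by
    rw [ENNReal.ofReal_ofNat]; exact hu.abs
  have key := integral_mul_le_Lp_mul_Lq_of_nonneg HolderConjugate.two_two
    (ae_of_all μ fun _ => zero_le_one) (ae_of_all μ fun x => abs_nonneg (u x))
    (memLp_const 1) hu'
  simp only [one_mul, rpow_two, one_pow, integral_const, smul_eq_mul, mul_one, sq_abs,
    ← sqrt_eq_rpow] at key
  exact key

theorem sqrt_integral_sq_le_of_abs_le {u : α → ℝ} {M : ℝ} (hM0 : 0 ≤ M)
    (hM : ∀ᵐ x ∂μ, |u x| ≤ M) : √(∫ x, u x ^ 2 ∂μ) ≤ √(μ.real univ) * M := by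
  have hsq : ∫ x, u x ^ 2 ∂μ ≤ μ.real univ * M ^ 2 := by
    simpa using integral_mono_of_nonneg (ae_of_all μ fun x => sq_nonneg (u x))
      (integrable_const (M ^ 2)) (hM.mono fun x hx => sq_le_sq' (abs_le.1 hx).1 (abs_le.1 hx).2)
  calc √(∫ x, u x ^ 2 ∂μ) ≤ √(μ.real univ * M ^ 2) := sqrt_le_sqrt hsq
    _ = √(μ.real univ) * M := by rw [sqrt_mul measureReal_nonneg, sqrt_sq hM0]

theorem integral_abs_sub_average_le {f : α → ℝ} (hf : Integrable f μ) :
    ∫ x, |f x - ⨍ y, f y ∂μ| ∂μ ≤ 2 * ∫ x, |f x| ∂μ := by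
  set m := ⨍ y, f y ∂μ
  have hm : μ.real univ * |m| ≤ ∫ x, |f x| ∂μ := by
    rw [← abs_of_nonneg (measureReal_nonneg (s := univ)), ← abs_mul, ← smul_eq_mul,
      measure_smul_average]
    exact norm_integral_le_integral_norm f
  calc ∫ x, |f x - m| ∂μ ≤ ∫ x, (|f x| + |m|) ∂μ :=
        integral_mono (hf.sub (integrable_const m)).abs (hf.abs.add (integrable_const _))
          fun x => abs_sub (f x) m
    _ = ∫ x, |f x| ∂μ + μ.real univ * |m| := by
        rw [integral_add hf.abs (integrable_const _), integral_const, smul_eq_mul]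
    _ ≤ 2 * ∫ x, |f x| ∂μ := by linarith

end FiniteMeasure

theorem Real.exp_neg_mul_le_rpow_neg {lam a t : ℝ} (hlam : 0 < lam) (ha : 0 < a) (ht : 0 < t) :
    exp (-(lam * t)) ≤ (a / lam) ^ a * exp (-a) * t ^ (-a) := by
  have hlog : a * log t ≤ lam * t - a + a * log (a / lam) := by
    have h := log_le_sub_one_of_pos (show 0 < t / (a / lam) by positivity)
    rw [log_div ht.ne' (by positivity)] at h
    have h' := mul_le_mul_of_nonneg_left h ha.le
    rw [mul_sub, mul_sub, mul_one, show a * (t / (a / lam)) = lam * t by field_simp] at h'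
    linarith
  rw [rpow_def_of_pos (by positivity), rpow_def_of_pos ht, ← exp_add, ← exp_add]
  exact exp_le_exp.2 (by linarith)

section Semigroup

variable {α : Type*} {Ω : Set α} {P : ℝ → (α → ℝ) → α → ℝ}

theorem eqOn_const_add_semigroup_sub_const
    (hPsg : ∀ t ≥ (0 : ℝ), ∀ s ≥ (0 : ℝ), ∀ f, ∀ x ∈ Ω, P (t + s) f x = P t (P s f) x)
    (hPlin : ∀ t ≥ (0 : ℝ), ∀ (f g : α → ℝ) (a b : ℝ), ∀ x ∈ Ω,
      P t (fun y => a * f y + b * g y) x = a * P t f x + b * P t g x)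
    (hPone : ∀ t ≥ (0 : ℝ), ∀ x ∈ Ω, P t (fun _ => (1 : ℝ)) x = 1)
    {r t : ℝ} (hr : 0 ≤ r) (hrt : r ≤ t) (f : α → ℝ) (m : ℝ) :
    EqOn (P t f) (fun y => m + P r (P (t - r) (fun z => f z - m)) y) Ω := by
  intro y hy
  have hsplit := hPlin t (hr.trans hrt) (fun _ => 1) (fun z => f z - m) m 1 y hy
  simp only [mul_one, one_mul, add_sub_cancel, hPone t (hr.trans hrt) y hy] at hsplit
  rw [hsplit]
  show m + _ = m + P r (P (t - r) _) y
  rw [← hPsg r hr (t - r) (sub_nonneg.2 hrt) _ y hy, add_sub_cancel]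

variable [MeasureSpace α] [IsFiniteMeasure (volume.restrict Ω)]

theorem setIntegral_abs_le_of_spectralGap (hΩ : MeasurableSet Ω)
    (hPsg : ∀ t ≥ (0 : ℝ), ∀ s ≥ (0 : ℝ), ∀ f, ∀ x ∈ Ω, P (t + s) f x = P t (P s f) x)
    (hPbb : ∀ t ≥ (0 : ℝ), ∀ f, Measurable f → (∃ M, ∀ y, |f y| ≤ M) →
      Measurable (P t f) ∧ ∃ M, ∀ y, |P t f y| ≤ M)
    (hPmass : ∀ t ≥ (0 : ℝ), ∀ f, Measurable f → (∃ M, ∀ y, |f y| ≤ M) →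
      ∫ x in Ω, P t f x = ∫ x in Ω, f x)
    {lam : ℝ} (hgap : ∀ t ≥ (0 : ℝ), ∀ f, Measurable f → (∃ M, ∀ y, |f y| ≤ M) →
      (∫ x in Ω, f x) = 0 →
      √(∫ x in Ω, (P t f x) ^ 2) ≤ exp (-lam * t) * √(∫ x in Ω, f x ^ 2))
    {r B : ℝ} (hr : 0 ≤ r) (hB : 0 ≤ B)
    (hUC : ∀ f, Measurable f → (∃ M, ∀ y, |f y| ≤ M) →
      ∀ x ∈ Ω, |P r f x| ≤ B * ∫ y in Ω, |f y|)
    {t : ℝ} (hrt : r ≤ t) {g : α → ℝ} (hg : Measurable g) (hgb : ∃ M, ∀ y, |g y| ≤ M)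
    (hg0 : ∫ x in Ω, g x = 0) :
    ∫ y in Ω, |P t g y| ≤ volume.real Ω * exp (-lam * (t - r)) * B * ∫ y in Ω, |g y| := by
  obtain ⟨hkm, hkb⟩ := hPbb r hr g hg hgb
  obtain ⟨hhm, hhb⟩ := hPbb t (hr.trans hrt) g hg hgb
  have hk0 : ∫ x in Ω, P r g x = 0 := by rw [hPmass r hr g hg hgb, hg0]
  have hhk : ∫ y in Ω, P t g y ^ 2 = ∫ y in Ω, P (t - r) (P r g) y ^ 2 :=
    setIntegral_congr_fun hΩ fun y hy => by
      rw [← hPsg (t - r) (sub_nonneg.2 hrt) r hr g y hy, sub_add_cancel]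
  have hk2 : √(∫ y in Ω, P r g y ^ 2) ≤ √(volume.real Ω) * (B * ∫ y in Ω, |g y|) := by
    rw [← measureReal_restrict_apply_univ]
    exact sqrt_integral_sq_le_of_abs_le (by positivity)
      ((ae_restrict_mem hΩ).mono fun x hx => hUC g hg hgb x hx)
  have hV : √(volume.real Ω) * √(volume.real Ω) = volume.real Ω :=
    mul_self_sqrt measureReal_nonneg
  calc ∫ y in Ω, |P t g y|
      ≤ √(volume.real Ω) * √(∫ y in Ω, P t g y ^ 2) := by
        rw [← measureReal_restrict_apply_univ]
        exact integral_abs_le_sqrt_measureReal_mul_sqrt_integral_sq (memLp_of_abs_le hhm hhb 2)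
    _ ≤ √(volume.real Ω) * (exp (-lam * (t - r)) * √(∫ y in Ω, P r g y ^ 2)) := by
        rw [hhk]
        gcongr
        exact hgap (t - r) (sub_nonneg.2 hrt) _ hkm hkb hk0
    _ ≤ √(volume.real Ω) *
          (exp (-lam * (t - r)) * (√(volume.real Ω) * (B * ∫ y in Ω, |g y|))) := by
        gcongr
    _ = volume.real Ω * exp (-lam * (t - r)) * B * ∫ y in Ω, |g y| := by
        linear_combination (exp (-lam * (t - r)) * B * ∫ y in Ω, |g y|) * hV

end Semigroup

section Gradient

variable {E : Type*} [NormedAddCommGroup E] [InnerProductSpace ℝ E] [CompleteSpace E]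

theorem gradient_eq_of_eqOn_const_add {s : Set E} {F G : E → ℝ} {c : ℝ}
    (h : EqOn F (fun y => c + G y) s) {x : E} (hx : x ∈ interior s) : ∇ F x = ∇ G x := by
  rw [(Filter.eventuallyEq_of_mem (mem_interior_iff_mem_nhds.1 hx) h).gradient_eq]
  simp only [gradient, fderiv_const_add]

variable [MeasureSpace E] {Ω : Set E} [IsFiniteMeasure (volume.restrict Ω)]
  {P : ℝ → (E → ℝ) → E → ℝ}

theorem norm_gradient_le_of_spectralGap (hΩ : MeasurableSet Ω)
    (hPsg : ∀ t ≥ (0 : ℝ), ∀ s ≥ (0 : ℝ), ∀ f, ∀ x ∈ Ω, P (t + s) f x = P t (P s f) x)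
    (hPlin : ∀ t ≥ (0 : ℝ), ∀ (f g : E → ℝ) (a b : ℝ), ∀ x ∈ Ω,
      P t (fun y => a * f y + b * g y) x = a * P t f x + b * P t g x)
    (hPone : ∀ t ≥ (0 : ℝ), ∀ x ∈ Ω, P t (fun _ => (1 : ℝ)) x = 1)
    (hPbb : ∀ t ≥ (0 : ℝ), ∀ f, Measurable f → (∃ M, ∀ y, |f y| ≤ M) →
      Measurable (P t f) ∧ ∃ M, ∀ y, |P t f y| ≤ M)
    (hPmass : ∀ t ≥ (0 : ℝ), ∀ f, Measurable f → (∃ M, ∀ y, |f y| ≤ M) →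
      ∫ x in Ω, P t f x = ∫ x in Ω, f x)
    {lam : ℝ} (hgap : ∀ t ≥ (0 : ℝ), ∀ f, Measurable f → (∃ M, ∀ y, |f y| ≤ M) →
      (∫ x in Ω, f x) = 0 →
      √(∫ x in Ω, (P t f x) ^ 2) ≤ exp (-lam * t) * √(∫ x in Ω, f x ^ 2))
    {r B₁ B₂ : ℝ} (hr : 0 ≤ r) (hB₁ : 0 ≤ B₁) (hB₂ : 0 ≤ B₂)
    (hUC : ∀ f, Measurable f → (∃ M, ∀ y, |f y| ≤ M) →
      ∀ x ∈ Ω, |P r f x| ≤ B₁ * ∫ y in Ω, |f y|)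
    (hgrad : ∀ f, Measurable f → (∃ M, ∀ y, |f y| ≤ M) →
      DifferentiableOn ℝ (P r f) (interior Ω) ∧ ∀ x ∈ interior Ω,
        ‖∇ (P r f) x‖ ≤ B₂ * ∫ y in Ω, |f y|)
    {t : ℝ} (hrt : 2 * r ≤ t) {f : E → ℝ} (hf : Measurable f) (hfb : ∃ M, ∀ y, |f y| ≤ M) :
    DifferentiableOn ℝ (P t f) (interior Ω) ∧ ∀ x ∈ interior Ω,
      ‖∇ (P t f) x‖ ≤
        2 * B₂ * volume.real Ω * B₁ * exp (-lam * (t - 2 * r)) * ∫ y in Ω, |f y| := by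
  set m := ⨍ y in Ω, f y
  set g : E → ℝ := fun z => f z - m
  have hg : Measurable g := hf.sub measurable_const
  have hgb : ∃ M, ∀ y, |g y| ≤ M :=
    let ⟨M, hM⟩ := hfb
    ⟨M + |m|, fun y => (abs_sub (f y) m).trans (by gcongr; exact hM y)⟩
  have hg0 : ∫ x in Ω, g x = 0 := integral_sub_average _ f
  have hg1 : ∫ y in Ω, |g y| ≤ 2 * ∫ y in Ω, |f y| :=
    integral_abs_sub_average_le ((memLp_of_abs_le hf hfb 1).integrable le_rfl)
  have hEq := eqOn_const_add_semigroup_sub_const hPsg hPlin hPone hr (t := t) (by linarith) f m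
  obtain ⟨hhm, hhb⟩ := hPbb (t - r) (by linarith) g hg hgb
  obtain ⟨hdiff, hbound⟩ := hgrad _ hhm hhb
  refine ⟨(hdiff.const_add m).congr fun y hy => hEq (interior_subset hy), fun x hx => ?_⟩
  have hL1 := setIntegral_abs_le_of_spectralGap hΩ hPsg hPbb hPmass hgap hr hB₁ hUC
    (t := t - r) (by linarith) hg hgb hg0
  rw [show t - r - r = t - 2 * r by ring] at hL1
  calc ‖∇ (P t f) x‖ = ‖∇ (P r (P (t - r) g)) x‖ := by
        rw [gradient_eq_of_eqOn_const_add hEq hx]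
    _ ≤ B₂ * ∫ y in Ω, |P (t - r) g y| := hbound x hx
    _ ≤ B₂ * (volume.real Ω * exp (-lam * (t - 2 * r)) * B₁ * (2 * ∫ y in Ω, |f y|)) := by
        gcongr
        exact hL1.trans (by gcongr)
    _ = 2 * B₂ * volume.real Ω * B₁ * exp (-lam * (t - 2 * r)) * ∫ y in Ω, |f y| := by ring

end Gradient

theorem gradient_bound_all_time_general {d : ℕ}
    {Ω : Set (EuclideanSpace ℝ (Fin d))}
    (hΩcomp : IsCompact Ω)
    (P : ℝ → (EuclideanSpace ℝ (Fin d) → ℝ) → EuclideanSpace ℝ (Fin d) → ℝ)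
    (hPsg : ∀ t ≥ (0 : ℝ), ∀ s ≥ (0 : ℝ), ∀ f, ∀ x ∈ Ω, P (t + s) f x = P t (P s f) x)
    (hPlin : ∀ t ≥ (0 : ℝ), ∀ (f g : EuclideanSpace ℝ (Fin d) → ℝ) (a b : ℝ), ∀ x ∈ Ω,
      P t (fun y => a * f y + b * g y) x = a * P t f x + b * P t g x)
    (hPone : ∀ t ≥ (0 : ℝ), ∀ x ∈ Ω, P t (fun _ => (1 : ℝ)) x = 1)
    (hPbb : ∀ t ≥ (0 : ℝ), ∀ f, Measurable f → (∃ M, ∀ y, |f y| ≤ M) →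
      Measurable (P t f) ∧ ∃ M, ∀ y, |P t f y| ≤ M)
    (hPmass : ∀ t ≥ (0 : ℝ), ∀ f, Measurable f → (∃ M, ∀ y, |f y| ≤ M) →
      ∫ x in Ω, P t f x = ∫ x in Ω, f x)
    {lam C₁ C₂ : ℝ} (hlam : 0 < lam) (hC₁ : 0 < C₁) (hC₂ : 0 < C₂)
    (hgap : ∀ t ≥ (0 : ℝ), ∀ f, Measurable f → (∃ M, ∀ y, |f y| ≤ M) →
      (∫ x in Ω, f x) = 0 →
      Real.sqrt (∫ x in Ω, (P t f x) ^ 2) ≤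
        Real.exp (-lam * t) * Real.sqrt (∫ x in Ω, f x ^ 2))
    (hUC : ∀ t ∈ Ioc (0 : ℝ) 1, ∀ f, Measurable f → (∃ M, ∀ y, |f y| ≤ M) →
      ∀ x ∈ Ω, |P t f x| ≤ C₁ * t ^ (-(d : ℝ) / 2) * ∫ y in Ω, |f y|)
    (hgrad : ∀ t ∈ Ioc (0 : ℝ) 1, ∀ f, Measurable f → (∃ M, ∀ y, |f y| ≤ M) →
      DifferentiableOn ℝ (P t f) (interior Ω) ∧ ∀ x ∈ interior Ω,
        ‖∇ (P t f) x‖ ≤ C₂ * t ^ (-((d : ℝ) + 1) / 2) * ∫ y in Ω, |f y|) :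
    ∃ C₃ > (0 : ℝ), ∀ t > (0 : ℝ), ∀ f, Measurable f → (∃ M, ∀ y, |f y| ≤ M) →
      DifferentiableOn ℝ (P t f) (interior Ω) ∧ ∀ x ∈ interior Ω,
        ‖∇ (P t f) x‖ ≤ C₃ * t ^ (-((d : ℝ) + 1) / 2) * ∫ y in Ω, |f y| := by
  have : IsFiniteMeasure (volume.restrict Ω) :=
    isFiniteMeasure_restrict.2 hΩcomp.measure_lt_top.ne
  set a : ℝ := ((d : ℝ) + 1) / 2
  set B₁ := C₁ * (1 / 2 : ℝ) ^ (-(d : ℝ) / 2)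
  set B₂ := C₂ * (1 / 2 : ℝ) ^ (-((d : ℝ) + 1) / 2)
  set K := 2 * B₂ * volume.real Ω * B₁ * exp lam * ((a / lam) ^ a * exp (-a))
  refine ⟨max C₂ K, lt_max_of_lt_left hC₂, fun t ht f hf hfb => ?_⟩
  rcases le_or_gt t 1 with ht1 | ht1
  · obtain ⟨hdiff, hbound⟩ := hgrad t ⟨ht, ht1⟩ f hf hfb
    exact ⟨hdiff, fun x hx => (hbound x hx).trans (by gcongr; exact le_max_left _ _)⟩
  have hhalf : (1 / 2 : ℝ) ∈ Ioc 0 1 := by norm_num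
  obtain ⟨hdiff, hbound⟩ := norm_gradient_le_of_spectralGap hΩcomp.isClosed.measurableSet
    hPsg hPlin hPone hPbb hPmass hgap (by norm_num) (by positivity) (by positivity)
    (hUC _ hhalf) (hgrad _ hhalf) (t := t) (by linarith) hf hfb
  refine ⟨hdiff, fun x hx => (hbound x hx).trans ?_⟩
  set I := ∫ y in Ω, |f y|
  have hshift : exp (-lam * (t - 2 * (1 / 2))) = exp lam * exp (-(lam * t)) := by
    rw [← exp_add]; ring_nf
  calc 2 * B₂ * volume.real Ω * B₁ * exp (-lam * (t - 2 * (1 / 2))) * I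
      = 2 * B₂ * volume.real Ω * B₁ * exp lam * exp (-(lam * t)) * I := by rw [hshift]; ring
    _ ≤ 2 * B₂ * volume.real Ω * B₁ * exp lam * ((a / lam) ^ a * exp (-a) * t ^ (-a)) * I := by
        gcongr
        exact exp_neg_mul_le_rpow_neg hlam (by positivity) ht
    _ = K * t ^ (-((d : ℝ) + 1) / 2) * I := by rw [neg_div]; ring
    _ ≤ max C₂ K * t ^ (-((d : ℝ) + 1) / 2) * I := by gcongr; exact le_max_right _ _

/-- Extension of the gradient estimate `‖∇P_t‖_{1→∞} ≤ C₃ t^{-(d+1)/2}` from small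
times to all positive times, for a Markov semigroup `(P_t)` of positivity-preserving
unital mass-preserving linear operators on the bounded Borel functions on a compact
convex `Ω ⊂ ℝ^d` with nonempty interior, given the spectral-gap `L²` decay for
mean-zero functions (`hgap`), the ultracontractive bound (`hUC`) and the short-time
gradient bound (`hgrad`). -/
theorem gradient_bound_all_time {d : ℕ}
    {Ω : Set (EuclideanSpace ℝ (Fin d))}
    (hΩcomp : IsCompact Ω) (hΩconv : Convex ℝ Ω) (hΩint : (interior Ω).Nonempty)
    (P : ℝ → (EuclideanSpace ℝ (Fin d) → ℝ) → EuclideanSpace ℝ (Fin d) → ℝ)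
    (hP0 : ∀ f, ∀ x ∈ Ω, P 0 f x = f x)
    (hPsg : ∀ t ≥ (0 : ℝ), ∀ s ≥ (0 : ℝ), ∀ f, ∀ x ∈ Ω, P (t + s) f x = P t (P s f) x)
    (hPlin : ∀ t ≥ (0 : ℝ), ∀ (f g : EuclideanSpace ℝ (Fin d) → ℝ) (a b : ℝ), ∀ x ∈ Ω,
      P t (fun y => a * f y + b * g y) x = a * P t f x + b * P t g x)
    (hPpos : ∀ t ≥ (0 : ℝ), ∀ f, (∀ y ∈ Ω, 0 ≤ f y) → ∀ x ∈ Ω, 0 ≤ P t f x)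
    (hPone : ∀ t ≥ (0 : ℝ), ∀ x ∈ Ω, P t (fun _ => (1 : ℝ)) x = 1)
    (hPbb : ∀ t ≥ (0 : ℝ), ∀ f, Measurable f → (∃ M, ∀ y, |f y| ≤ M) →
      Measurable (P t f) ∧ ∃ M, ∀ y, |P t f y| ≤ M)
    (hPmass : ∀ t ≥ (0 : ℝ), ∀ f, Measurable f → (∃ M, ∀ y, |f y| ≤ M) →
      ∫ x in Ω, P t f x = ∫ x in Ω, f x)
    {lam C₁ C₂ : ℝ} (hlam : 0 < lam) (hC₁ : 0 < C₁) (hC₂ : 0 < C₂)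
    (hgap : ∀ t ≥ (0 : ℝ), ∀ f, Measurable f → (∃ M, ∀ y, |f y| ≤ M) →
      (∫ x in Ω, f x) = 0 →
      Real.sqrt (∫ x in Ω, (P t f x) ^ 2) ≤
        Real.exp (-lam * t) * Real.sqrt (∫ x in Ω, f x ^ 2))
    (hUC : ∀ t ∈ Ioc (0 : ℝ) 1, ∀ f, Measurable f → (∃ M, ∀ y, |f y| ≤ M) →
      ∀ x ∈ Ω, |P t f x| ≤ C₁ * t ^ (-(d : ℝ) / 2) * ∫ y in Ω, |f y|)
    (hgrad : ∀ t ∈ Ioc (0 : ℝ) 1, ∀ f, Measurable f → (∃ M, ∀ y, |f y| ≤ M) →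
      DifferentiableOn ℝ (P t f) (interior Ω) ∧ ∀ x ∈ interior Ω,
        ‖∇ (P t f) x‖ ≤ C₂ * t ^ (-((d : ℝ) + 1) / 2) * ∫ y in Ω, |f y|) :
    ∃ C₃ > (0 : ℝ), ∀ t > (0 : ℝ), ∀ f, Measurable f → (∃ M, ∀ y, |f y| ≤ M) →
      DifferentiableOn ℝ (P t f) (interior Ω) ∧ ∀ x ∈ interior Ω,
        ‖∇ (P t f) x‖ ≤ C₃ * t ^ (-((d : ℝ) + 1) / 2) * ∫ y in Ω, |f y| :=
  gradient_bound_all_time_general hΩcomp P hPsg hPlin hPone hPbb hPmass hlam hC₁ hC₂ hgap hUC hgrad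
end
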